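/- arXiv:0901.3215 — 2 statements merged into one kernel-verified Lean document; each statement's English description precedes it below -/
import Mathlib

section
/- Among all seeds of the form #^p - #^q with p+q = d fixed and p,q ≥ 1, the 1-critical length (the minimal m such that the seed solves the (m,1)-problem) is minimized when p = ⌈d/2⌉ and q = ⌊d/2⌋, with minimal critical length d + ⌈d/2⌉ + 1. -/
/-!
With `q ≥ 1`, the 1-critical length of `#^p - #^q` is `p + q + max p q + 1`: a single zero can
always be avoided once the word is that long, while in a shorter word a zero just before the last
possible occurrence (if `p ≥ q`) or `q` positions from the end (if `q ≥ p`) cannot. For fixed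
`p + q = d` this is smallest when `max p q = ⌈d/2⌉`.
-/

/-- Number of zeros of word `w` among positions `0 .. m-1`. -/
def zerosIn (m : ℕ) (w : ℕ → Bool) : ℕ :=
  ((Finset.range m).filter (fun j => w j = false)).card

/-- Seed `Q` matches word `w` of length `m` at position `i`. -/
def MatchesAt (Q : Finset ℕ) (m : ℕ) (w : ℕ → Bool) (i : ℕ) : Prop :=
  ∀ p ∈ Q, i + p < m ∧ w (i + p) = true

/-- Seed `Q` detects word `w` of length `m`. -/
def Detects (Q : Finset ℕ) (m : ℕ) (w : ℕ → Bool) : Prop :=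
  ∃ i, MatchesAt Q m w i

/-- Seed `Q` solves the linear `(m,k)`-problem. -/
def Solves (Q : Finset ℕ) (m k : ℕ) : Prop :=
  ∀ w : ℕ → Bool, zerosIn m w ≤ k → Detects Q m w

/-- A family of seeds solves the linear `(m,k)`-problem. -/
def FSolves (F : Set (Finset ℕ)) (m k : ℕ) : Prop :=
  ∀ w : ℕ → Bool, zerosIn m w ≤ k → ∃ Q ∈ F, Detects Q m w

/-- Seed `Q` solves the cyclic `(m,k)`-problem. -/
def CSolves (Q : Finset ℕ) (m k : ℕ) : Prop :=
  ∀ w : ℕ → Bool, zerosIn m w ≤ k →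
    ∃ j < m, ∀ p ∈ Q, w ((j + p) % m) = true

/-- The seed `#^p - #^q` : matching positions `0..p-1` and `p+1..p+q`. -/
def Qpq (p q : ℕ) : Finset ℕ := Finset.range p ∪ Finset.Icc (p+1) (p+q)

/-- The `k`-critical length of a seed: least `m` such that it solves the `(m,k)`-problem. -/
noncomputable def critLen (Q : Finset ℕ) (k : ℕ) : ℕ := sInf {m | Solves Q m k}

section SingleZero

variable {Q : Finset ℕ} {m : ℕ}

theorem Detects.mono {w w' : ℕ → Bool} (h : Detects Q m w)
    (hle : ∀ j < m, w j = true → w' j = true) : Detects Q m w' := by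
  obtain ⟨i, hi⟩ := h
  exact ⟨i, fun r hr => ⟨(hi r hr).1, hle _ (hi r hr).1 (hi r hr).2⟩⟩

theorem zerosIn_single_le_one (m z : ℕ) : zerosIn m (fun j => decide (j ≠ z)) ≤ 1 := by
  refine Finset.card_le_one_iff_subset_singleton.mpr ⟨z, fun j hj => ?_⟩
  simp only [Finset.mem_filter, decide_eq_false_iff_not, not_not] at hj
  simp [hj.2]

theorem detects_single_iff {z : ℕ} :
    Detects Q m (fun j => decide (j ≠ z)) ↔ ∃ i, ∀ r ∈ Q, i + r < m ∧ i + r ≠ z := by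
  simp [Detects, MatchesAt]

/-- Detection only sees the word on `[0, m)`, and is monotone in it, so the words with one
zero at `z` (the all-ones word being the case `z ≥ m`) are the only ones to test. -/
theorem solves_one_iff :
    Solves Q m 1 ↔ ∀ z, Detects Q m (fun j => decide (j ≠ z)) := by
  refine ⟨fun h z => h _ (zerosIn_single_le_one m z), fun h w hw => ?_⟩
  obtain ⟨z, hz⟩ := Finset.card_le_one_iff_subset_singleton.mp hw
  refine (h z).mono fun j hj _ => ?_
  by_contra hwj
  have : j ∈ ({z} : Finset ℕ) := hz (by simpa [hj] using hwj)
  simp_all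

end SingleZero

section GappedSeed

variable {p q m : ℕ}

theorem mem_Qpq {x : ℕ} : x ∈ Qpq p q ↔ x < p ∨ (p + 1 ≤ x ∧ x ≤ p + q) := by
  simp [Qpq]

theorem le_of_mem_Qpq {x : ℕ} (hx : x ∈ Qpq p q) : x ≤ p + q := by
  rcases mem_Qpq.mp hx with h | h <;> omega

/-- A zero at `z` is jumped over: by the gap if the left block fits before it, by shifting
the seed past it if `z < p`, and it is out of reach if it lies in the last `q` positions. -/
theorem detects_single_Qpq (hm : p + q + max p q + 1 ≤ m) (z : ℕ) :
    Detects (Qpq p q) m (fun j => decide (j ≠ z)) := by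
  refine detects_single_iff.mpr ?_
  rcases lt_or_ge z p with hzp | hpz
  · exact ⟨z + 1, fun r hr => by have := le_of_mem_Qpq hr; omega⟩
  rcases lt_or_ge (z + q) m with hzq | hzq
  · refine ⟨z - p, fun r hr => ⟨by have := le_of_mem_Qpq hr; omega, ?_⟩⟩
    rcases mem_Qpq.mp hr with h | h <;> omega
  · exact ⟨0, fun r hr => by have := le_of_mem_Qpq hr; omega⟩

theorem not_solves_Qpq (hq : 1 ≤ q) (hm : m ≤ p + q + max p q) : ¬Solves (Qpq p q) m 1 := by
  have hlast : p + q ∈ Qpq p q := mem_Qpq.mpr (Or.inr ⟨by omega, le_rfl⟩)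
  intro h
  rcases le_total p q with hpq | hqp
  · obtain ⟨i, hi⟩ := detects_single_iff.mp (solves_one_iff.mp h (m - q))
    have := (hi _ hlast).1
    exact (hi (m - q - i) (mem_Qpq.mpr (Or.inr ⟨by omega, by omega⟩))).2 (by omega)
  · obtain ⟨i, hi⟩ := detects_single_iff.mp (solves_one_iff.mp h (m - (p + q + 1)))
    have := (hi _ hlast).1
    exact (hi (m - (p + q + 1) - i) (mem_Qpq.mpr (Or.inl (by omega)))).2 (by omega)

theorem solves_Qpq_one_iff (hq : 1 ≤ q) : Solves (Qpq p q) m 1 ↔ p + q + max p q + 1 ≤ m :=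
  ⟨fun h => by by_contra hm; exact not_solves_Qpq hq (by omega) h,
    fun hm => solves_one_iff.mpr (detects_single_Qpq hm)⟩

theorem critLen_Qpq_one (p : ℕ) (hq : 1 ≤ q) : critLen (Qpq p q) 1 = p + q + max p q + 1 := by
  have : {m | Solves (Qpq p q) m 1} = Set.Ici (p + q + max p q + 1) := by
    ext m
    exact solves_Qpq_one_iff hq
  rw [critLen, this, csInf_Ici]

end GappedSeed

/-- among seeds `#^p - #^q` with `p + q = d`, `p,q ≥ 1`, the 1-critical
length is minimized by `p = ⌈d/2⌉`, `q = ⌊d/2⌋`, and equals `d + ⌈d/2⌉ + 1`. -/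
theorem stmt3 (d : ℕ) (hd : 2 ≤ d) :
    critLen (Qpq ((d+1)/2) (d/2)) 1 = d + (d+1)/2 + 1 ∧
    (∀ p q : ℕ, 1 ≤ p → 1 ≤ q → p + q = d →
      critLen (Qpq ((d+1)/2) (d/2)) 1 ≤ critLen (Qpq p q) 1) := by
  have hbalanced : critLen (Qpq ((d+1)/2) (d/2)) 1 = d + (d+1)/2 + 1 := by
    rw [critLen_Qpq_one _ (by omega)]
    omega
  refine ⟨hbalanced, fun p q _ hq hpq => ?_⟩
  rw [hbalanced, critLen_Qpq_one p hq]
  omega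
end

section
/- For fixed k, let w(m) be the maximal weight of a seed solving the linear (m,k)-problem. Then m - w(m) = Θ(m^{k/(k+1)}). -/
/-- The maximal weight of a seed solving the linear `(m,k)`-problem. -/
noncomputable def wmax (k m : ℕ) : ℕ :=
  sSup {c | ∃ Q : Finset ℕ, 0 ∈ Q ∧ Solves Q m k ∧ Q.card = c}

open Finset

def IsJoker (k t x : ℕ) : Prop := ∃ i < k, x / t ^ i % t = t - 1

instance (k t : ℕ) : DecidablePred (IsJoker k t) := fun _ => by unfold IsJoker; infer_instance

lemma div_pow_mod_add_mul_pow {t i k : ℕ} (x c : ℕ) (hi : i < k) :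
    (x + c * t ^ k) / t ^ i % t = x / t ^ i % t := by
  rcases t.eq_zero_or_pos with rfl | ht
  · simp [zero_pow (by omega : k ≠ 0)]
  have hk : c * t ^ k = c * t ^ (k - i - 1) * t * t ^ i := by
    rw [mul_assoc, mul_assoc, ← pow_succ', ← pow_add]; congr 2; omega
  rw [hk, Nat.add_mul_div_right _ _ (by positivity), Nat.add_mul_mod_self_right]

lemma isJoker_add_mul_pow {k t x : ℕ} (c : ℕ) : IsJoker k t (x + c * t ^ k) ↔ IsJoker k t x :=
  exists_congr fun _ => and_congr_right fun hi => by rw [div_pow_mod_add_mul_pow x c hi]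

lemma IsJoker.mono {k k' t x : ℕ} (h : k ≤ k') : IsJoker k t x → IsJoker k' t x :=
  fun ⟨i, hi, hx⟩ => ⟨i, by omega, hx⟩

/-- Induction on `k`: a further shift by a multiple of `t^k` raises digit `k` of the new position to
`t - 1` and leaves all lower digits, hence the jokers already reached, unchanged. -/
theorem exists_shift_forall_isJoker {t : ℕ} (ht : 0 < t) (k : ℕ) (Z : Finset ℕ)
    (hZ : #Z ≤ k) :
    ∃ s < t ^ k, ∀ z ∈ Z, IsJoker k t (z + s) := by
  induction k generalizing Z with
  | zero =>
    obtain rfl : Z = ∅ := card_eq_zero.1 (Nat.le_zero.1 hZ)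
    exact ⟨0, by simp, by simp⟩
  | succ k ih =>
    rcases Z.eq_empty_or_nonempty with rfl | ⟨z₀, hz₀⟩
    · exact ⟨0, by positivity, by simp⟩
    obtain ⟨s, hs, hZs⟩ := ih (Z.erase z₀) (by rw [card_erase_of_mem hz₀]; omega)
    set d := (z₀ + s) / t ^ k % t
    have hd : d < t := Nat.mod_lt _ ht
    refine ⟨s + (t - 1 - d) * t ^ k, ?_, fun z hz => ?_⟩
    · have hpow : t ^ (k + 1) = t ^ k + (t - 1) * t ^ k := by
        obtain ⟨u, rfl⟩ := Nat.exists_eq_add_of_lt ht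
        simp only [pow_succ', Nat.add_sub_cancel]; ring
      rw [hpow]
      exact Nat.add_lt_add_of_lt_of_le hs (Nat.mul_le_mul_right _ (Nat.sub_le _ _))
    rw [← add_assoc]
    by_cases hzz : z = z₀
    · subst hzz
      refine ⟨k, k.lt_succ_self, ?_⟩
      rw [Nat.add_mul_div_right _ _ (by positivity), ← Nat.mod_add_mod,
        show d + (t - 1 - d) = t - 1 by omega, Nat.mod_eq_of_lt (by omega)]
    · exact ((isJoker_add_mul_pow _).2 (hZs z (mem_erase.2 ⟨hzz, hz⟩))).mono k.le_succ

def jokerFreeSeed (k t N : ℕ) : Finset ℕ := (range N).filter (¬ IsJoker k t ·)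

lemma zero_mem_jokerFreeSeed {k t N : ℕ} (ht : 2 ≤ t) (hN : 0 < N) :
    0 ∈ jokerFreeSeed k t N := by
  rw [jokerFreeSeed, mem_filter, mem_range]
  refine ⟨hN, fun ⟨i, _, h⟩ => ?_⟩
  rw [Nat.zero_div, Nat.zero_mod] at h
  omega

theorem solves_jokerFreeSeed {k t m : ℕ} (ht : 0 < t) (h : t ^ k ≤ m) :
    Solves (jokerFreeSeed k t (m - t ^ k)) m k := by
  intro w hw
  obtain ⟨s, hs, hZs⟩ := exists_shift_forall_isJoker ht k _ hw
  refine ⟨t ^ k - s, fun p hp => ?_⟩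
  simp only [jokerFreeSeed, mem_filter, mem_range] at hp
  refine ⟨by omega, ?_⟩
  by_contra hw0
  have hjok := hZs (t ^ k - s + p) (mem_filter.2 ⟨mem_range.2 (by omega), by simpa using hw0⟩)
  rw [show t ^ k - s + p + s = p + 1 * t ^ k by omega, isJoker_add_mul_pow] at hjok
  exact hp.2 hjok

lemma card_filter_div_pow_mod_eq_le {t : ℕ} (ht : 0 < t) (N i d : ℕ) :
    #((range N).filter (fun x => x / t ^ i % t = d)) ≤ (N / t ^ (i + 1) + 1) * t ^ i := by
  have h := card_le_card_of_injOn (fun x => (x / t ^ (i + 1), x % t ^ i))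
    (s := (range N).filter (fun x => x / t ^ i % t = d))
    (t := range (N / t ^ (i + 1) + 1) ×ˢ range (t ^ i)) ?_ ?_
  · simpa using h
  · intro x hx
    simp only [coe_filter, mem_range, Set.mem_ofPred_eq] at hx
    simp only [coe_product, coe_range, Set.mem_prod, Set.mem_Iio]
    exact ⟨Nat.lt_succ_of_le (Nat.div_le_div_right hx.1.le), Nat.mod_lt _ (by positivity)⟩
  · intro x hx y hy hxy
    simp only [coe_filter, mem_range, Set.mem_ofPred_eq] at hx hy
    simp only [Prod.mk.injEq] at hxy
    -- `x` is recovered from `x / t^(i+1)`, its digit `i` and `x % t^i`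
    rw [← Nat.div_add_mod x (t ^ (i + 1)), ← Nat.div_add_mod y (t ^ (i + 1)), Nat.mod_pow_succ,
      Nat.mod_pow_succ, hx.2, hy.2, hxy.1, hxy.2]

lemma card_filter_isJoker_le {t : ℕ} (ht : 0 < t) (k N : ℕ) :
    #((range N).filter (IsJoker k t)) ≤ k * (N / t + t ^ k) := by
  have hsub : (range N).filter (IsJoker k t) ⊆
      (range k).biUnion (fun i => (range N).filter (fun x => x / t ^ i % t = t - 1)) := by
    intro x hx
    obtain ⟨hxN, i, hi, hxi⟩ := mem_filter.1 hx
    exact mem_biUnion.2 ⟨i, mem_range.2 hi, mem_filter.2 ⟨hxN, hxi⟩⟩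
  calc _ ≤ _ := card_le_card hsub
    _ ≤ #(range k) * (N / t + t ^ k) := card_biUnion_le_card_mul _ _ _ fun i hi => ?_
    _ = k * (N / t + t ^ k) := by rw [card_range]
  have hdiv : N / t ^ (i + 1) * t ^ i ≤ N / t := by
    rw [pow_succ', ← Nat.div_div_eq_div_mul]; exact Nat.div_mul_le_self _ _
  have hpow : t ^ i ≤ t ^ k := Nat.pow_le_pow_right ht (mem_range.1 hi).le
  have hcount := card_filter_div_pow_mod_eq_le ht N i (t - 1)
  rw [add_one_mul] at hcount
  omega

lemma sub_card_jokerFreeSeed_le {t : ℕ} (ht : 0 < t) (k m : ℕ) :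
    m - #(jokerFreeSeed k t (m - t ^ k)) ≤ t ^ k + k * (m / t + t ^ k) := by
  have hsplit := card_filter_add_card_filter_not (s := range (m - t ^ k)) (IsJoker k t)
  have hjok := card_filter_isJoker_le ht k (m - t ^ k)
  have hdiv : (m - t ^ k) / t ≤ m / t := Nat.div_le_div_right (Nat.sub_le _ _)
  have : k * ((m - t ^ k) / t + t ^ k) ≤ k * (m / t + t ^ k) := Nat.mul_le_mul_left _ (by omega)
  rw [card_range] at hsplit
  unfold jokerFreeSeed
  omega

def wordWithZeros (Z : Finset ℕ) (j : ℕ) : Bool := j ∉ Z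

instance (Q : Finset ℕ) (m : ℕ) (w : ℕ → Bool) (i : ℕ) :
    Decidable (MatchesAt Q m w i) := by
  unfold MatchesAt; infer_instance

lemma zerosIn_wordWithZeros {m : ℕ} {Z : Finset ℕ} (h : Z ⊆ range m) :
    zerosIn m (wordWithZeros Z) = #Z := by
  rw [zerosIn, show (range m).filter (wordWithZeros Z · = false) = Z by
    ext j; simpa [wordWithZeros] using fun hj => mem_range.1 (h hj)]

lemma MatchesAt.card_le_sub {Q : Finset ℕ} {m i : ℕ} {w : ℕ → Bool}
    (h : MatchesAt Q m w i) : #Q ≤ m - i := by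
  have hsub : Q.image (i + ·) ⊆ Ico i m := fun x hx => by
    obtain ⟨p, hp, rfl⟩ := mem_image.1 hx
    exact mem_Ico.2 ⟨Nat.le_add_right _ _, (h p hp).1⟩
  simpa [card_image_of_injective _ (add_right_injective i)] using card_le_card hsub

/-- A match at `i` leaves only the `m - |Q|` positions outside `i + Q` free for the zeros. -/
lemma card_filter_matchesAt_le (Q : Finset ℕ) (m k i : ℕ) :
    #(((range m).powersetCard k).filter (fun Z => MatchesAt Q m (wordWithZeros Z) i))
      ≤ (m - #Q).choose k := by
  by_cases hi : ∀ p ∈ Q, i + p < m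
  · have himg : Q.image (i + ·) ⊆ range m := fun x hx => by
      obtain ⟨p, hp, rfl⟩ := mem_image.1 hx
      exact mem_range.2 (hi p hp)
    have hsub : ((range m).powersetCard k).filter (fun Z => MatchesAt Q m (wordWithZeros Z) i)
        ⊆ (range m \ Q.image (i + ·)).powersetCard k := by
      intro Z hZ
      simp only [mem_filter, mem_powersetCard] at hZ
      refine mem_powersetCard.2 ⟨fun z hz => mem_sdiff.2 ⟨hZ.1.1 hz, fun hzQ => ?_⟩, hZ.1.2⟩
      obtain ⟨p, hp, rfl⟩ := mem_image.1 hzQ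
      simpa [wordWithZeros, hz] using (hZ.2 p hp).2
    refine (card_le_card hsub).trans_eq ?_
    rw [card_powersetCard, card_sdiff_of_subset himg, card_range,
      card_image_of_injective _ (add_right_injective i)]
  · push Not at hi
    obtain ⟨p, hp, hpm⟩ := hi
    rw [filter_false_of_mem fun Z _ hZ => by have := (hZ p hp).1; omega, card_empty]
    exact Nat.zero_le _

/-- Each word with exactly `k` zeros is matched at one of the `m - |Q| + 1` possible positions. -/
theorem choose_le_mul_choose_of_solves {Q : Finset ℕ} {m k : ℕ} (hQ : Q.Nonempty)
    (hs : Solves Q m k) : m.choose k ≤ (m - #Q + 1) * (m - #Q).choose k := by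
  set S := (range m).powersetCard k
  have hcover : S ⊆ (range (m - #Q + 1)).biUnion
      (fun i => S.filter (fun Z => MatchesAt Q m (wordWithZeros Z) i)) := by
    intro Z hZ
    obtain ⟨hZm, hZk⟩ := mem_powersetCard.1 hZ
    obtain ⟨i, hi⟩ := hs _ ((zerosIn_wordWithZeros hZm).trans_le hZk.le)
    have him := (hi _ hQ.choose_spec).1
    have hcard := hi.card_le_sub
    exact mem_biUnion.2 ⟨i, mem_range.2 (by omega), mem_filter.2 ⟨hZ, hi⟩⟩
  calc m.choose k = #S := by rw [card_powersetCard, card_range]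
    _ ≤ _ := card_le_card hcover
    _ ≤ #(range (m - #Q + 1)) * (m - #Q).choose k :=
      card_biUnion_le_card_mul _ _ _ fun i _ => card_filter_matchesAt_le Q m k i
    _ = _ := by rw [card_range]

lemma Solves.subset_range {Q : Finset ℕ} {m k : ℕ} (h : Solves Q m k) : Q ⊆ range m := by
  obtain ⟨i, hi⟩ := h (fun _ => true) (by simp [zerosIn])
  exact fun p hp => mem_range.2 (by have := (hi p hp).1; omega)

lemma solves_singleton_zero {m k : ℕ} (h : k < m) : Solves {0} m k := by
  intro w hw
  by_contra hno
  have hzeros : (range m).filter (w · = false) = range m :=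
    filter_true_of_mem fun j hjm => by
      by_contra hj
      refine hno ⟨j, fun p hp => ?_⟩
      rw [mem_singleton.1 hp, add_zero]
      exact ⟨mem_range.1 hjm, by simpa using hj⟩
  rw [zerosIn, hzeros, card_range] at hw
  omega

lemma bddAbove_solving_weights (k m : ℕ) :
    BddAbove {c | ∃ Q : Finset ℕ, 0 ∈ Q ∧ Solves Q m k ∧ #Q = c} :=
  ⟨m, by rintro _ ⟨Q, -, hs, rfl⟩; simpa using card_le_card hs.subset_range⟩

lemma card_le_wmax {k m : ℕ} {Q : Finset ℕ} (h0 : 0 ∈ Q) (hs : Solves Q m k) :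
    #Q ≤ wmax k m :=
  le_csSup (bddAbove_solving_weights k m) ⟨Q, h0, hs, rfl⟩

lemma exists_card_eq_wmax {k m : ℕ} (h : k < m) :
    ∃ Q : Finset ℕ, 0 ∈ Q ∧ Solves Q m k ∧ #Q = wmax k m :=
  Nat.sSup_mem (s := {c | ∃ Q : Finset ℕ, 0 ∈ Q ∧ Solves Q m k ∧ #Q = c})
    ⟨1, {0}, mem_singleton_self 0, solves_singleton_zero h, rfl⟩
    (bddAbove_solving_weights k m)

theorem pow_le_two_pow_mul_sub_wmax_pow {k m : ℕ} (hk : 1 ≤ k) (hm : 2 * k ≤ m) :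
    m ^ k ≤ 2 ^ (k + 1) * (m - wmax k m) ^ (k + 1) := by
  obtain ⟨Q, h0, hs, hQ⟩ := exists_card_eq_wmax (by omega : k < m)
  have hcount := choose_le_mul_choose_of_solves ⟨0, h0⟩ hs
  rw [hQ] at hcount
  set n := m - wmax k m
  have hfall : (m + 1 - k) ^ k ≤ (n + 1) * n ^ k :=
    calc (m + 1 - k) ^ k ≤ m.descFactorial k := Nat.pow_sub_le_descFactorial m k
      _ = k.factorial * m.choose k := Nat.descFactorial_eq_factorial_mul_choose m k
      _ ≤ k.factorial * ((n + 1) * n.choose k) := Nat.mul_le_mul_left _ hcount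
      _ = (n + 1) * n.descFactorial k := by rw [Nat.descFactorial_eq_factorial_mul_choose]; ring
      _ ≤ (n + 1) * n ^ k := Nat.mul_le_mul_left _ (Nat.descFactorial_le_pow n k)
  have hsucc : (n + 1) * n ^ k ≤ 2 * n ^ (k + 1) := by
    rcases n.eq_zero_or_pos with hn | hn
    · simp [hn, zero_pow (by omega : k ≠ 0)]
    · rw [pow_succ', ← mul_assoc]
      exact Nat.mul_le_mul_right _ (by omega)
  calc m ^ k ≤ (2 * (m + 1 - k)) ^ k := Nat.pow_le_pow_left (by omega) k
    _ = 2 ^ k * (m + 1 - k) ^ k := mul_pow _ _ _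
    _ ≤ 2 ^ k * (2 * n ^ (k + 1)) := Nat.mul_le_mul_left _ (hfall.trans hsucc)
    _ = 2 ^ (k + 1) * n ^ (k + 1) := by ring

theorem sub_wmax_le {k m t : ℕ} (ht : 2 ≤ t) (htm : t ^ k < m) :
    m - wmax k m ≤ t ^ k + k * (m / t + t ^ k) :=
  (Nat.sub_le_sub_left (card_le_wmax (zero_mem_jokerFreeSeed ht (by omega))
    (solves_jokerFreeSeed (by omega) htm.le)) m).trans (sub_card_jokerFreeSeed_le (by omega) k m)

lemma rpow_div_add_one_eq_pow {x : ℝ} (hx : 0 ≤ x) (k : ℕ) :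
    x ^ ((k : ℝ) / (k + 1)) = (x ^ ((k : ℝ) + 1)⁻¹) ^ k := by
  rw [← Real.rpow_natCast, ← Real.rpow_mul hx, div_eq_mul_inv, mul_comm]

lemma rpow_inv_add_one_pow {x : ℝ} (hx : 0 ≤ x) (k : ℕ) :
    (x ^ ((k : ℝ) + 1)⁻¹) ^ (k + 1) = x := by
  exact_mod_cast Real.rpow_inv_natCast_pow hx k.succ_ne_zero

theorem half_mul_rpow_le_sub_wmax {k m : ℕ} (hk : 1 ≤ k) (hm : 2 * k ≤ m) :
    1 / 2 * (m : ℝ) ^ ((k : ℝ) / (k + 1)) ≤ ((m - wmax k m : ℕ) : ℝ) := by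
  set r := (m : ℝ) ^ ((k : ℝ) + 1)⁻¹
  have hpow : (r ^ k) ^ (k + 1) ≤ (2 * ((m - wmax k m : ℕ) : ℝ)) ^ (k + 1) := by
    rw [← pow_mul, mul_comm, pow_mul, rpow_inv_add_one_pow m.cast_nonneg, mul_pow]
    exact_mod_cast pow_le_two_pow_mul_sub_wmax_pow hk hm
  rw [rpow_div_add_one_eq_pow m.cast_nonneg]
  linarith [(pow_le_pow_iff_left₀ (by positivity) (by positivity) k.succ_ne_zero).1 hpow]

theorem sub_wmax_le_mul_rpow {k m : ℕ} (hm : 2 ^ ((k + 1) ^ 2) ≤ m) :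
    ((m - wmax k m : ℕ) : ℝ) ≤
      (((k : ℝ) + 1) * 2 ^ k + k) * (m : ℝ) ^ ((k : ℝ) / (k + 1)) := by
  set r := (m : ℝ) ^ ((k : ℝ) + 1)⁻¹
  have hr0 : 0 ≤ r := by positivity
  have hrm : r ^ (k + 1) = m := rpow_inv_add_one_pow m.cast_nonneg k
  have hr : 2 ^ (k + 1) ≤ r := by
    rw [← pow_le_pow_iff_left₀ (by positivity) hr0 k.succ_ne_zero, hrm, ← pow_mul, ← sq]
    exact_mod_cast hm
  have h2 : (2 : ℝ) ≤ 2 ^ (k + 1) := le_self_pow₀ (by norm_num) k.succ_ne_zero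
  set t := ⌈r⌉₊
  have htr : r ≤ t := Nat.le_ceil r
  have ht2r : (t : ℝ) ≤ 2 * r := (Nat.ceil_lt_add_one hr0).le.trans (by linarith)
  have ht : 2 ≤ t := by exact_mod_cast h2.trans (hr.trans htr)
  have htk : (t : ℝ) ^ k ≤ 2 ^ k * r ^ k :=
    (pow_le_pow_left₀ (by positivity) ht2r k).trans_eq (mul_pow _ _ _)
  have htm : t ^ k < m := by
    have hrk : 0 < r ^ k := pow_pos (by linarith) k
    have : (t : ℝ) ^ k < m :=
      calc (t : ℝ) ^ k ≤ 2 ^ k * r ^ k := htk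
        _ < 2 ^ (k + 1) * r ^ k := by gcongr <;> norm_num
        _ ≤ r * r ^ k := by gcongr
        _ = m := by rw [← pow_succ', hrm]
    exact_mod_cast this
  have hdiv : ((m / t : ℕ) : ℝ) ≤ r ^ k := Nat.cast_div_le.trans <| by
    rw [div_le_iff₀ (by linarith), ← hrm, pow_succ]
    gcongr
  rw [rpow_div_add_one_eq_pow m.cast_nonneg]
  calc ((m - wmax k m : ℕ) : ℝ) ≤ t ^ k + k * ((m / t : ℕ) + t ^ k) := by
        exact_mod_cast sub_wmax_le ht htm
    _ ≤ 2 ^ k * r ^ k + k * (r ^ k + 2 ^ k * r ^ k) := by gcongr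
    _ = ((k + 1) * 2 ^ k + k) * r ^ k := by ring

/-- for fixed `k`, the maximal weight `w(m)` of a seed solving the linear
`(m,k)`-problem satisfies `m - w(m) = Θ(m^{k/(k+1)})`. -/
theorem stmt15 (k : ℕ) (hk : 1 ≤ k) :
    ∃ c₁ c₂ : ℝ, 0 < c₁ ∧ 0 < c₂ ∧ ∃ M : ℕ, ∀ m : ℕ, M ≤ m →
      c₁ * (m : ℝ) ^ ((k : ℝ) / (k + 1)) ≤ ((m - wmax k m : ℕ) : ℝ) ∧
      ((m - wmax k m : ℕ) : ℝ) ≤ c₂ * (m : ℝ) ^ ((k : ℝ) / (k + 1)) := by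
  refine ⟨1 / 2, ((k : ℝ) + 1) * 2 ^ k + k, by norm_num, by positivity, 2 ^ ((k + 1) ^ 2),
    fun m hm => ⟨half_mul_rpow_le_sub_wmax hk ?_, sub_wmax_le_mul_rpow hm⟩⟩
  have hk2 : 2 * k < 2 ^ (k + 1) := by
    rw [pow_succ']; exact Nat.mul_lt_mul_of_pos_left Nat.lt_two_pow_self two_pos
  have hpow : 2 ^ (k + 1) ≤ 2 ^ ((k + 1) ^ 2) := Nat.pow_le_pow_right two_pos (by nlinarith)
  omega
end
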